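/- Let 0 < s ≤ 1/2 and 1/2 ≤ t ≤ 1−s. Then there is a constant c_{n,s} such that for every cube Q ⊂ ℝⁿ, every integer m ≥ 0, and every locally integrable function f, ∫_{2^m Q} |f(y) − m_f(t,Q)| dy ≤ c_{n,s} · (1 + m) · |2^m Q| · inf_{y ∈ Q} M♯f(y). -/

import Mathlib

open MeasureTheory ENNReal

namespace LocalMedian

/-- Euclidean space `ℝⁿ`. -/
abbrev Sp (n : ℕ) := EuclideanSpace ℝ (Fin n)

/-- An axis-parallel cube in `ℝⁿ`, given by its lower corner and (positive) sidelength. -/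
structure Cube (n : ℕ) where
  corner : Sp n
  side : ℝ
  side_pos : 0 < side

namespace Cube

variable {n : ℕ}

/-- The set of points of the cube. -/
def set (Q : Cube n) : Set (Sp n) :=
  {x | ∀ i, Q.corner i ≤ x i ∧ x i ≤ Q.corner i + Q.side}

/-- The center of the cube. -/
noncomputable def center (Q : Cube n) : Sp n := WithLp.toLp 2 (fun i => Q.corner i + Q.side / 2)

/-- The cube concentric with `Q` whose sidelength is `r` times that of `Q`. -/
noncomputable def dilate (Q : Cube n) (r : ℝ) (hr : 0 < r) : Cube n where
  corner := WithLp.toLp 2 (fun i => Q.center i - r * Q.side / 2)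
  side := r * Q.side
  side_pos := mul_pos hr Q.side_pos

/-- `Q` is a dyadic subcube of `Q₀`, i.e. obtained from `Q₀` by repeated dyadic
subdivision into `2ⁿ` congruent subcubes. -/
def dyadicSub (Q₀ Q : Cube n) : Prop :=
  ∃ (k : ℕ) (m : Fin n → ℕ), (∀ i, m i < 2 ^ k) ∧
    Q.side = Q₀.side / 2 ^ k ∧ ∀ i, Q.corner i = Q₀.corner i + Q.side * m i

/-- `Q` is one of the `2ⁿ` dyadic children of `P` (so `P` is the dyadic parent of `Q`). -/
def isDyadicChild (Q P : Cube n) : Prop :=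
  Q.side = P.side / 2 ∧ ∃ m : Fin n → ℕ, (∀ i, m i < 2) ∧
    ∀ i, Q.corner i = P.corner i + Q.side * m i

end Cube

variable {n : ℕ}

/-- The (maximal) median of `f` over the cube `Q` with parameter `t`:
`m_f(t,Q) = sup { M : |{y ∈ Q : f y < M}| ≤ t|Q| }`. -/
noncomputable def median (f : Sp n → ℝ) (t : ℝ) (Q : Cube n) : ℝ :=
  sSup {M : ℝ | volume {y ∈ Q.set | f y < M} ≤ ENNReal.ofReal t * volume Q.set}

/-- The local oscillation `inf_c inf {α ≥ 0 : |{y ∈ Q : |f y - c| > α}| < s|Q|}`. -/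
noncomputable def osc (f : Sp n → ℝ) (s : ℝ) (Q : Cube n) : ℝ :=
  ⨅ c : ℝ, sInf {α : ℝ | 0 ≤ α ∧
    volume {y ∈ Q.set | α < |f y - c|} < ENNReal.ofReal s * volume Q.set}

/-- The local sharp maximal function `M♯_{0,s,Q₀} f`, restricted to the cube `Q₀`. -/
noncomputable def sharpLoc (f : Sp n → ℝ) (s : ℝ) (Q₀ : Cube n) (x : Sp n) : ℝ≥0∞ :=
  ⨆ Q : {Q : Cube n // x ∈ Q.set ∧ Q.set ⊆ Q₀.set}, ENNReal.ofReal (osc f s Q.1)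

/-- The local sharp maximal function `M♯_{0,s} f` (over all cubes containing `x`). -/
noncomputable def sharp (f : Sp n → ℝ) (s : ℝ) (x : Sp n) : ℝ≥0∞ :=
  ⨆ Q : {Q : Cube n // x ∈ Q.set}, ENNReal.ofReal (osc f s Q.1)

/-- The Hardy–Littlewood maximal function (over cubes containing `x`). -/
noncomputable def maximal (f : Sp n → ℝ) (x : Sp n) : ℝ≥0∞ :=
  ⨆ Q : {Q : Cube n // x ∈ Q.set},
    (∫⁻ y in Q.1.set, ENNReal.ofReal |f y|) / volume Q.1.set

/-- The Hardy–Littlewood maximal function of an `ℝ≥0∞`-valued function. -/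
noncomputable def maximalE (g : Sp n → ℝ≥0∞) (x : Sp n) : ℝ≥0∞ :=
  ⨆ Q : {Q : Cube n // x ∈ Q.set}, (∫⁻ y in Q.1.set, g y) / volume Q.1.set

/-- The average `(1/|Q|) ∫_Q g`. -/
noncomputable def cubeAvg (g : Sp n → ℝ) (Q : Cube n) : ℝ :=
  (volume Q.set).toReal⁻¹ * ∫ y in Q.set, g y

/-- The Fefferman–Stein sharp maximal function
`M♯ g(x) = sup_{Q ∋ x} (1/|Q|) ∫_Q |g - g_Q|`. -/
noncomputable def fsSharp (g : Sp n → ℝ) (x : Sp n) : ℝ≥0∞ :=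
  ⨆ Q : {Q : Cube n // x ∈ Q.set},
    ENNReal.ofReal (cubeAvg (fun y => |g y - cubeAvg g Q.1|) Q.1)


/-!
Write `f_P` for the average of `f` over a cube `P` and fix `y ∈ Q`, so that every average
`⨍_P |f - f_P|` with `P ∋ y` is at most `β = M♯f(y)`.
By Chebyshev, `|{|f - f_Q| ≥ α}| < s|Q|` as soon as `α > β / s`; since `s ≤ t ≤ 1 - s`, the
level `f_Q - α` then lies below the median and `f_Q + α` above it, so `|m_f(t,Q) - f_Q| ≤ β / s`.
The averages over the nested cubes `2^j Q ⊂ 2^(j+1) Q` differ by at most `2ⁿ β`, so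
`|f_Q - f_{2^m Q}| ≤ m 2ⁿ β`, and
`⨍_{2^m Q} |f - m_f(t,Q)| ≤ β + m 2ⁿ β + β / s ≤ (2ⁿ + 1/s)(1 + m) β`.
-/

namespace Cube

lemma set_eq_preimage_pi (Q : Cube n) : Q.set =
    (MeasurableEquiv.toLp 2 (Fin n → ℝ)).symm ⁻¹'
      Set.univ.pi fun i => Set.Icc (Q.corner i) (Q.corner i + Q.side) := by
  ext x
  simp only [set, Set.mem_ofPred_eq, Set.mem_preimage, Set.mem_univ_pi, Set.mem_Icc]
  rfl

lemma isCompact_set (Q : Cube n) : IsCompact Q.set := by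
  rw [show Q.set = (EuclideanSpace.equiv (Fin n) ℝ).toHomeomorph ⁻¹'
      Set.univ.pi fun i => Set.Icc (Q.corner i) (Q.corner i + Q.side) from Q.set_eq_preimage_pi,
    Homeomorph.isCompact_preimage]
  exact isCompact_univ_pi fun _ => isCompact_Icc

lemma measurableSet_set (Q : Cube n) : MeasurableSet Q.set := by
  rw [set_eq_preimage_pi]
  exact (MeasurableEquiv.toLp 2 (Fin n → ℝ)).symm.measurable
    (MeasurableSet.univ_pi fun _ => measurableSet_Icc)

lemma volume_set (Q : Cube n) : volume Q.set = ENNReal.ofReal (Q.side ^ n) := by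
  rw [set_eq_preimage_pi,
    (EuclideanSpace.volume_preserving_symm_measurableEquiv_toLp (Fin n)).measure_preimage
      (MeasurableSet.univ_pi fun _ => measurableSet_Icc).nullMeasurableSet,
    volume_pi_pi]
  simp [Real.volume_Icc, ← ENNReal.ofReal_pow Q.side_pos.le]

lemma volume_set_ne_top (Q : Cube n) : volume Q.set ≠ ⊤ := by
  rw [volume_set]; exact ENNReal.ofReal_ne_top

lemma volume_set_pos (Q : Cube n) : 0 < volume Q.set := by
  rw [volume_set]; exact ENNReal.ofReal_pos.2 (pow_pos Q.side_pos n)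

lemma ofReal_mul_volume_set_ne_zero (Q : Cube n) {c : ℝ} (hc : 0 < c) :
    ENNReal.ofReal c * volume Q.set ≠ 0 :=
  mul_ne_zero (ENNReal.ofReal_pos.2 hc).ne' Q.volume_set_pos.ne'

lemma toReal_volume_set (Q : Cube n) : (volume Q.set).toReal = Q.side ^ n := by
  rw [volume_set, ENNReal.toReal_ofReal (pow_pos Q.side_pos n).le]

lemma mem_set_iff_abs_sub_center_le (Q : Cube n) (x : Sp n) :
    x ∈ Q.set ↔ ∀ i, |x i - Q.center i| ≤ Q.side / 2 := by
  simp only [set, center, Set.mem_ofPred_eq, abs_le]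
  refine forall_congr' fun i => ?_
  constructor <;> rintro ⟨h₁, h₂⟩ <;> constructor <;> linarith

lemma center_dilate (Q : Cube n) {r : ℝ} (hr : 0 < r) : (Q.dilate r hr).center = Q.center := by
  ext i
  simp only [center, dilate]
  ring

lemma set_dilate_subset (Q : Cube n) {r r' : ℝ} (hr : 0 < r) (hr' : 0 < r') (h : r ≤ r') :
    (Q.dilate r hr).set ⊆ (Q.dilate r' hr').set := by
  intro x hx
  rw [mem_set_iff_abs_sub_center_le, center_dilate] at hx ⊢
  intro i
  have := mul_le_mul_of_nonneg_right h Q.side_pos.le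
  exact (hx i).trans (by simp only [dilate]; linarith)

lemma set_dilate_one (Q : Cube n) : (Q.dilate 1 one_pos).set = Q.set := by
  ext x
  rw [mem_set_iff_abs_sub_center_le, mem_set_iff_abs_sub_center_le, center_dilate]
  simp only [dilate, one_mul]

lemma subset_set_dilate (Q : Cube n) {r : ℝ} (hr : 0 < r) (h : 1 ≤ r) :
    Q.set ⊆ (Q.dilate r hr).set :=
  Q.set_dilate_one ▸ Q.set_dilate_subset one_pos hr h

end Cube

lemma _root_.MeasureTheory.LocallyIntegrable.integrableOn_cube {f : Sp n → ℝ}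
    (hf : LocallyIntegrable f volume) (Q : Cube n) : IntegrableOn f Q.set volume :=
  hf.integrableOn_isCompact Q.isCompact_set

lemma _root_.MeasureTheory.IntegrableOn.abs_sub_const {X : Type*} [MeasurableSpace X]
    {μ : Measure X} {s : Set X} {h : X → ℝ} (hh : IntegrableOn h s μ) (hs : μ s ≠ ⊤) (c : ℝ) :
    IntegrableOn (fun y => |h y - c|) s μ :=
  (hh.sub (integrableOn_const hs)).abs

section cubeAvg

variable {f g : Sp n → ℝ} {P Q : Cube n}

lemma cubeAvg_eq (g : Sp n → ℝ) (Q : Cube n) :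
    cubeAvg g Q = (Q.side ^ n)⁻¹ * ∫ y in Q.set, g y := by
  rw [cubeAvg, Q.toReal_volume_set]

lemma cubeAvg_nonneg (hg : ∀ y, 0 ≤ g y) (Q : Cube n) : 0 ≤ cubeAvg g Q :=
  mul_nonneg (inv_nonneg.2 ENNReal.toReal_nonneg) (integral_nonneg hg)

lemma cubeAvg_mono (hf : IntegrableOn f Q.set volume) (hg : IntegrableOn g Q.set volume)
    (h : ∀ y, f y ≤ g y) : cubeAvg f Q ≤ cubeAvg g Q :=
  mul_le_mul_of_nonneg_left (integral_mono hf hg h) (inv_nonneg.2 ENNReal.toReal_nonneg)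

lemma cubeAvg_add_const (hf : IntegrableOn f Q.set volume) (c : ℝ) :
    cubeAvg (fun y => f y + c) Q = cubeAvg f Q + c := by
  rw [cubeAvg, cubeAvg, integral_add hf (integrableOn_const Q.volume_set_ne_top),
    setIntegral_const, smul_eq_mul, measureReal_def, mul_add, ← mul_assoc,
    inv_mul_cancel₀ (ENNReal.toReal_pos Q.volume_set_pos.ne' Q.volume_set_ne_top).ne', one_mul]

lemma cubeAvg_sub_const (hf : IntegrableOn f Q.set volume) (c : ℝ) :
    cubeAvg (fun y => f y - c) Q = cubeAvg f Q - c := by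
  simpa only [sub_eq_add_neg] using cubeAvg_add_const hf (-c)

lemma abs_cubeAvg_le (g : Sp n → ℝ) (Q : Cube n) :
    |cubeAvg g Q| ≤ cubeAvg (fun y => |g y|) Q := by
  rw [cubeAvg, cubeAvg, abs_mul, abs_of_nonneg (inv_nonneg.2 ENNReal.toReal_nonneg)]
  exact mul_le_mul_of_nonneg_left (abs_integral_le_integral_abs)
    (inv_nonneg.2 ENNReal.toReal_nonneg)

lemma cubeAvg_le_of_subset (hg : ∀ y, 0 ≤ g y) (hgi : IntegrableOn g Q.set volume)
    (hPQ : P.set ⊆ Q.set) : cubeAvg g P ≤ (Q.side / P.side) ^ n * cubeAvg g Q := by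
  have hP := pow_pos P.side_pos n
  have hQ := pow_pos Q.side_pos n
  have hratio : (Q.side / P.side) ^ n * (Q.side ^ n)⁻¹ = (P.side ^ n)⁻¹ := by
    rw [div_pow]; field_simp
  rw [cubeAvg_eq, cubeAvg_eq, ← mul_assoc, hratio]
  exact mul_le_mul_of_nonneg_left
    (setIntegral_mono_set hgi (.of_forall hg) hPQ.eventuallyLE) (inv_nonneg.2 hP.le)

lemma lintegral_ofReal_eq_volume_mul_cubeAvg (hg : ∀ y, 0 ≤ g y)
    (hgi : IntegrableOn g Q.set volume) :
    ∫⁻ y in Q.set, ENNReal.ofReal (g y) = volume Q.set * ENNReal.ofReal (cubeAvg g Q) := by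
  rw [← ofReal_integral_eq_lintegral_ofReal hgi (.of_forall hg), cubeAvg,
    ENNReal.ofReal_mul (inv_nonneg.2 ENNReal.toReal_nonneg), ← mul_assoc,
    ENNReal.ofReal_inv_of_pos (ENNReal.toReal_pos Q.volume_set_pos.ne' Q.volume_set_ne_top),
    ENNReal.ofReal_toReal Q.volume_set_ne_top,
    ENNReal.mul_inv_cancel Q.volume_set_pos.ne' Q.volume_set_ne_top, one_mul]

lemma volume_le_cubeAvg_div_mul (hg : ∀ y, 0 ≤ g y) (hgi : IntegrableOn g Q.set volume)
    {α : ℝ} (hα : 0 < α) :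
    volume {y ∈ Q.set | α ≤ g y} ≤ ENNReal.ofReal (cubeAvg g Q / α) * volume Q.set := by
  have hmarkov := meas_ge_le_lintegral_div (μ := volume.restrict Q.set)
    (f := fun y => ENNReal.ofReal (g y)) hgi.aemeasurable.ennreal_ofReal
    (ENNReal.ofReal_pos.2 hα).ne' ENNReal.ofReal_ne_top
  rw [Measure.restrict_apply' Q.measurableSet_set,
    lintegral_ofReal_eq_volume_mul_cubeAvg hg hgi] at hmarkov
  calc volume {y ∈ Q.set | α ≤ g y}
      = volume ({y | ENNReal.ofReal α ≤ ENNReal.ofReal (g y)} ∩ Q.set) := by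
        congr 1; ext y
        simp only [Set.mem_ofPred_eq, Set.mem_inter_iff, ENNReal.ofReal_le_ofReal_iff (hg y)]
        exact and_comm
    _ ≤ volume Q.set * ENNReal.ofReal (cubeAvg g Q) / ENNReal.ofReal α := hmarkov
    _ = ENNReal.ofReal (cubeAvg g Q / α) * volume Q.set := by
        rw [ENNReal.ofReal_div_of_pos hα, div_eq_mul_inv, div_eq_mul_inv]; ring

lemma abs_cubeAvg_sub_cubeAvg_le (hf : IntegrableOn f Q.set volume) (hPQ : P.set ⊆ Q.set) :
    |cubeAvg f P - cubeAvg f Q| ≤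
      (Q.side / P.side) ^ n * cubeAvg (fun y => |f y - cubeAvg f Q|) Q := by
  rw [← cubeAvg_sub_const (hf.mono_set hPQ)]
  exact (abs_cubeAvg_le _ P).trans (cubeAvg_le_of_subset (fun _ => abs_nonneg _)
    (hf.abs_sub_const (Cube.volume_set_ne_top _) _) hPQ)

lemma cubeAvg_congr_set (h : P.set = Q.set) : cubeAvg g P = cubeAvg g Q := by
  rw [cubeAvg, cubeAvg, h]

end cubeAvg

section median

variable {f : Sp n → ℝ} {Q : Cube n} {t : ℝ}

lemma volume_lt_sub_le_of_cubeAvg_div_le (hfi : IntegrableOn f Q.set volume) (c : ℝ) {α : ℝ}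
    (hα : 0 < α) (h : cubeAvg (fun y => |f y - c|) Q / α ≤ t) :
    volume {y ∈ Q.set | f y < c - α} ≤ ENNReal.ofReal t * volume Q.set := by
  have hsub : {y ∈ Q.set | f y < c - α} ⊆ {y ∈ Q.set | α ≤ |f y - c|} :=
    fun y ⟨hy, hlt⟩ => ⟨hy, by rw [abs_sub_comm]; exact le_abs.2 (Or.inl (by linarith))⟩
  calc volume {y ∈ Q.set | f y < c - α}
      ≤ ENNReal.ofReal (cubeAvg (fun y => |f y - c|) Q / α) * volume Q.set :=
        (measure_mono hsub).trans (volume_le_cubeAvg_div_mul (fun _ => abs_nonneg _)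
          (hfi.abs_sub_const (Cube.volume_set_ne_top _) c) hα)
    _ ≤ ENNReal.ofReal t * volume Q.set := by gcongr

lemma le_add_of_volume_lt_le (hfi : IntegrableOn f Q.set volume) (c : ℝ) {α M : ℝ}
    (hα : 0 < α) (ht : 0 ≤ t) (h : cubeAvg (fun y => |f y - c|) Q / α < 1 - t)
    (hM : volume {y ∈ Q.set | f y < M} ≤ ENNReal.ofReal t * volume Q.set) : M ≤ c + α := by
  by_contra! hlt
  have hcover : Q.set ⊆ {y ∈ Q.set | f y < M} ∪ {y ∈ Q.set | α ≤ |f y - c|} := by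
    intro y hy
    rcases le_or_gt α |f y - c| with h | h
    · exact Or.inr ⟨hy, h⟩
    · exact Or.inl ⟨hy, by linarith [le_abs_self (f y - c)]⟩
  have hA := div_nonneg (cubeAvg_nonneg (fun y => abs_nonneg (f y - c)) Q) hα.le
  have hfrac : ENNReal.ofReal t + ENNReal.ofReal (cubeAvg (fun y => |f y - c|) Q / α) < 1 := by
    rw [← ENNReal.ofReal_add ht hA, ← ENNReal.ofReal_one, ENNReal.ofReal_lt_ofReal_iff one_pos]
    linarith
  have hle : volume Q.set ≤
      (ENNReal.ofReal t + ENNReal.ofReal (cubeAvg (fun y => |f y - c|) Q / α)) * volume Q.set :=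
    calc volume Q.set
        ≤ volume {y ∈ Q.set | f y < M} + volume {y ∈ Q.set | α ≤ |f y - c|} :=
          (measure_mono hcover).trans (measure_union_le _ _)
      _ ≤ _ := by
          rw [add_mul]
          exact add_le_add hM (volume_le_cubeAvg_div_mul (fun _ => abs_nonneg _)
            (hfi.abs_sub_const (Cube.volume_set_ne_top _) c) hα)
  have := (ENNReal.mul_lt_mul_iff_left Q.volume_set_pos.ne' Q.volume_set_ne_top).2 hfrac
  rw [one_mul] at this
  exact (hle.trans_lt this).false

lemma abs_median_sub_le {s : ℝ} (hs : 0 < s) (hst : s ≤ t) (ht : t ≤ 1 - s)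
    (hfi : IntegrableOn f Q.set volume) (c : ℝ) :
    |median f t Q - c| ≤ cubeAvg (fun y => |f y - c|) Q / s := by
  set A := cubeAvg (fun y => |f y - c|) Q
  have hA : 0 ≤ A := cubeAvg_nonneg (fun y => abs_nonneg _) Q
  have hfrac : ∀ α, A / s < α → A / α < s := fun α hα => by
    have hαpos : 0 < α := (div_nonneg hA hs.le).trans_lt hα
    rw [div_lt_iff₀ hαpos]; rw [div_lt_iff₀ hs] at hα; linarith
  set S : Set ℝ := {M | volume {y ∈ Q.set | f y < M} ≤ ENNReal.ofReal t * volume Q.set}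
  have hlower : ∀ α, A / s < α → c - α ∈ S := fun α hα =>
    volume_lt_sub_le_of_cubeAvg_div_le hfi c ((div_nonneg hA hs.le).trans_lt hα)
      ((hfrac α hα).le.trans hst)
  have hupper : ∀ α, A / s < α → ∀ M ∈ S, M ≤ c + α := fun α hα M hM =>
    le_add_of_volume_lt_le hfi c ((div_nonneg hA hs.le).trans_lt hα) (hs.le.trans hst)
      ((hfrac α hα).trans_le (by linarith)) hM
  have hα₀ : A / s < A / s + 1 := lt_add_one _
  refine le_of_forall_gt_imp_ge_of_dense fun α hα => abs_sub_le_iff.2 ⟨?_, ?_⟩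
  · have := csSup_le ⟨_, hlower _ hα₀⟩ (hupper α hα)
    rw [median]; linarith
  · have := le_csSup ⟨_, hupper _ hα₀⟩ (hlower α hα)
    rw [median]; linarith

end median

namespace Cube

noncomputable def dilateTwoPow (Q : Cube n) (j : ℕ) : Cube n := Q.dilate (2 ^ j) (by positivity)

lemma set_dilateTwoPow_zero (Q : Cube n) : (Q.dilateTwoPow 0).set = Q.set := by
  simp only [dilateTwoPow, pow_zero, set_dilate_one]

lemma subset_set_dilateTwoPow (Q : Cube n) (j : ℕ) : Q.set ⊆ (Q.dilateTwoPow j).set :=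
  Q.subset_set_dilate _ (one_le_pow₀ one_le_two)

lemma set_dilateTwoPow_subset_succ (Q : Cube n) (j : ℕ) :
    (Q.dilateTwoPow j).set ⊆ (Q.dilateTwoPow (j + 1)).set :=
  Q.set_dilate_subset _ _ (pow_le_pow_right₀ one_le_two j.le_succ)

lemma side_dilateTwoPow_succ_div (Q : Cube n) (j : ℕ) :
    (Q.dilateTwoPow (j + 1)).side / (Q.dilateTwoPow j).side = 2 := by
  simp only [dilateTwoPow, dilate, pow_succ]
  field_simp [Q.side_pos.ne']

end Cube

section sharp

variable {f : Sp n → ℝ} {Q : Cube n}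

lemma abs_cubeAvg_sub_cubeAvg_dilateTwoPow_le (hf : LocallyIntegrable f volume) {β : ℝ}
    (hβ : ∀ j, cubeAvg (fun y => |f y - cubeAvg f (Q.dilateTwoPow j)|) (Q.dilateTwoPow j) ≤ β)
    (m : ℕ) : |cubeAvg f Q - cubeAvg f (Q.dilateTwoPow m)| ≤ m * (2 ^ n * β) := by
  have hstep : ∀ j, |cubeAvg f (Q.dilateTwoPow j) - cubeAvg f (Q.dilateTwoPow (j + 1))| ≤
      2 ^ n * β := fun j => by
    have := abs_cubeAvg_sub_cubeAvg_le (hf.integrableOn_cube _)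
      (Q.set_dilateTwoPow_subset_succ j)
    rw [Q.side_dilateTwoPow_succ_div] at this
    exact this.trans (mul_le_mul_of_nonneg_left (hβ _) (by positivity))
  rw [← cubeAvg_congr_set Q.set_dilateTwoPow_zero]
  calc |cubeAvg f (Q.dilateTwoPow 0) - cubeAvg f (Q.dilateTwoPow m)|
      ≤ ∑ j ∈ Finset.range m,
          |cubeAvg f (Q.dilateTwoPow j) - cubeAvg f (Q.dilateTwoPow (j + 1))| :=
        dist_le_range_sum_dist (fun j => cubeAvg f (Q.dilateTwoPow j)) m
    _ ≤ ∑ _j ∈ Finset.range m, 2 ^ n * β := Finset.sum_le_sum fun j _ => hstep j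
    _ = m * (2 ^ n * β) := by simp

lemma cubeAvg_abs_sub_median_le {s t : ℝ} (hs : 0 < s) (hst : s ≤ t) (ht : t ≤ 1 - s)
    (hf : LocallyIntegrable f volume) {β : ℝ}
    (hβ : ∀ j, cubeAvg (fun y => |f y - cubeAvg f (Q.dilateTwoPow j)|) (Q.dilateTwoPow j) ≤ β)
    (m : ℕ) :
    cubeAvg (fun y => |f y - median f t Q|) (Q.dilateTwoPow m) ≤
      (2 ^ n + 1 / s) * (1 + m) * β := by
  set P := Q.dilateTwoPow m
  have hβ₀ : 0 ≤ β := (cubeAvg_nonneg (fun _ => abs_nonneg _) _).trans (hβ 0)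
  have hmedian : |median f t Q - cubeAvg f Q| ≤ β / s := by
    refine (abs_median_sub_le hs hst ht (hf.integrableOn_cube Q) _).trans ?_
    rw [← cubeAvg_congr_set (g := fun y => |f y - cubeAvg f Q|) Q.set_dilateTwoPow_zero,
      ← cubeAvg_congr_set (g := f) Q.set_dilateTwoPow_zero]
    exact div_le_div_of_nonneg_right (hβ 0) hs.le
  have htelescope : |cubeAvg f P - cubeAvg f Q| ≤ m * (2 ^ n * β) := by
    rw [abs_sub_comm]; exact abs_cubeAvg_sub_cubeAvg_dilateTwoPow_le hf hβ m
  have hfP := hf.integrableOn_cube P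
  calc cubeAvg (fun y => |f y - median f t Q|) P
      ≤ cubeAvg (fun y => |f y - cubeAvg f P| + |cubeAvg f P - median f t Q|) P :=
        cubeAvg_mono (hfP.abs_sub_const P.volume_set_ne_top _)
          ((hfP.abs_sub_const P.volume_set_ne_top _).add (integrableOn_const P.volume_set_ne_top))
          fun _ => abs_sub_le _ _ _
    _ = cubeAvg (fun y => |f y - cubeAvg f P|) P + |cubeAvg f P - median f t Q| :=
        cubeAvg_add_const (hfP.abs_sub_const P.volume_set_ne_top _) _
    _ ≤ β + (m * (2 ^ n * β) + β / s) := by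
        gcongr
        · exact hβ m
        · rw [abs_sub_comm] at hmedian
          exact (abs_sub_le _ (cubeAvg f Q) _).trans (add_le_add htelescope hmedian)
    _ ≤ (2 ^ n + 1 / s) * (1 + m) * β := by
        have h2n : (1 : ℝ) ≤ 2 ^ n := one_le_pow₀ one_le_two
        have hs' : 0 ≤ 1 / s := by positivity
        rw [div_eq_mul_one_div β s]
        nlinarith [mul_nonneg (sub_nonneg.2 h2n) hβ₀,
          mul_nonneg m.cast_nonneg (mul_nonneg hβ₀ hs')]

end sharp

lemma cubeAvg_abs_sub_cubeAvg_le_toReal_fsSharp {f : Sp n → ℝ} {P : Cube n} {y : Sp n}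
    (hy : y ∈ P.set) (hfy : fsSharp f y ≠ ⊤) :
    cubeAvg (fun z => |f z - cubeAvg f P|) P ≤ (fsSharp f y).toReal :=
  (ENNReal.ofReal_le_iff_le_toReal hfy).1 <| le_iSup (fun P : {P : Cube n // y ∈ P.set} =>
    ENNReal.ofReal (cubeAvg (fun z => |f z - cubeAvg f P.1|) P.1)) ⟨P, hy⟩

lemma lintegral_abs_sub_median_le_fsSharp {f : Sp n → ℝ} {Q : Cube n} {s t : ℝ} (hs : 0 < s)
    (hst : s ≤ t) (ht : t ≤ 1 - s) (hf : LocallyIntegrable f volume) (m : ℕ) {y : Sp n}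
    (hy : y ∈ Q.set) :
    ∫⁻ z in (Q.dilateTwoPow m).set, ENNReal.ofReal |f z - median f t Q| ≤
      ENNReal.ofReal ((2 ^ n + 1 / s) * (1 + m)) * volume (Q.dilateTwoPow m).set *
        fsSharp f y := by
  by_cases hfy : fsSharp f y = ⊤
  · rw [hfy, ENNReal.mul_top ((Q.dilateTwoPow m).ofReal_mul_volume_set_ne_zero (by positivity))]
    exact le_top
  have havg := cubeAvg_abs_sub_median_le hs hst ht hf
    (fun j => cubeAvg_abs_sub_cubeAvg_le_toReal_fsSharp (Q.subset_set_dilateTwoPow j hy) hfy) m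
  rw [lintegral_ofReal_eq_volume_mul_cubeAvg (fun _ => abs_nonneg _)
    ((hf.integrableOn_cube _).abs_sub_const (Cube.volume_set_ne_top _) _)]
  calc volume (Q.dilateTwoPow m).set *
        ENNReal.ofReal (cubeAvg (fun z => |f z - median f t Q|) (Q.dilateTwoPow m))
      ≤ volume (Q.dilateTwoPow m).set *
          ENNReal.ofReal ((2 ^ n + 1 / s) * (1 + m) * (fsSharp f y).toReal) := by
        gcongr
    _ = _ := by
        rw [ENNReal.ofReal_mul (by positivity), ENNReal.ofReal_toReal hfy]
        ring

/-- Let `0 < s ≤ 1/2` and `1/2 ≤ t ≤ 1 − s`. There is `c_{n,s} > 0`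
such that for every cube `Q ⊂ ℝⁿ`, every integer `m ≥ 0`, and every locally
integrable `f`:
`∫_{2^m Q} |f(y) − m_f(t,Q)| dy ≤ c_{n,s} (1 + m) |2^m Q| inf_{y ∈ Q} M♯f(y)`. -/
theorem statement10 {n : ℕ} (s t : ℝ) (hs0 : 0 < s) (hs : s ≤ 1 / 2)
    (ht : 1 / 2 ≤ t) (ht1 : t ≤ 1 - s) :
    ∃ c : ℝ, 0 < c ∧
      ∀ (Q : Cube n) (m : ℕ) (f : Sp n → ℝ), LocallyIntegrable f volume →
        (∫⁻ y in (Q.dilate (2 ^ m) (by positivity)).set,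
            ENNReal.ofReal |f y - median f t Q|)
          ≤ ENNReal.ofReal (c * (1 + m)) *
              volume (Q.dilate (2 ^ m) (by positivity)).set *
                ⨅ y : Q.set, fsSharp f ↑y := by
  refine ⟨2 ^ n + 1 / s, by positivity, fun Q m f hf => ?_⟩
  show _ ≤ _ * volume (Q.dilateTwoPow m).set * _
  rw [ENNReal.mul_iInf_of_ne ((Q.dilateTwoPow m).ofReal_mul_volume_set_ne_zero (by positivity))
    (ENNReal.mul_ne_top ENNReal.ofReal_ne_top (Cube.volume_set_ne_top _))]
  exact le_iInf fun y =>
    lintegral_abs_sub_median_le_fsSharp hs0 (hs.trans ht) ht1 hf m y.2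

end LocalMedian
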